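/- Let G be a graph possessing a perfect matching of size μ = n/2, let α ≥ 0, and let M be a maximal matching of G with |M| ≤ (1/2 + α)·μ. Then the symmetric difference M ⊕ OPT of M with a maximum matching OPT contains at least (1/2 - 3α)·μ vertex-disjoint augmenting paths of length three. -/

import Mathlib

/-- The vertex set of a length-three augmenting path encoded as a 4-tuple. -/
def pathVerts {V : Type*} [DecidableEq V] (p : V × V × V × V) : Finset V :=
  {p.1, p.2.1, p.2.2.1, p.2.2.2}

/-!
Let `o` and `m` be the partner maps of `OPT` and `M`. By maximality the `o`-partner of an
unmatched vertex is matched, so the set `W` of matched vertices with unmatched `o`-partner has as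
many elements as there are unmatched vertices, `n - |V(M)|`. An `M`-edge `{a, m a}` with both
ends in `W` gives the augmenting path `o a, a, m a, o (m a)`, and paths of distinct such edges
are disjoint. An `M`-edge with just one end in `W` has its other end in `V(M) \ W`, hence
`2 |W| ≤ |A| + |V(M)|` for the set `A` of ends of the good edges, and with `|V(M)| ≤ 2 |M|`
there are `|A| / 2 ≥ n - 3 |M|` good edges.
-/

open Finset

namespace Finset

variable {α : Type*} {s t : Finset α} {f : α → α}

theorem two_mul_card_le_card_filter_add_card [DecidableEq α] (hts : t ⊆ s)
    (hf : ∀ a ∈ t, f a ∈ s) (hinj : Set.InjOn f t) :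
    2 * #t ≤ #{a ∈ t | f a ∈ t} + #s := by
  have hsplit := card_filter_add_card_filter_not (s := t) (fun a => f a ∈ t)
  have hout : #{a ∈ t | f a ∉ t} ≤ #(s \ t) :=
    card_le_card_of_injOn f (fun a ha => by simp_all) (hinj.mono (coe_subset.2 (filter_subset _ _)))
  rw [card_sdiff_of_subset hts] at hout
  have := card_le_card hts
  omega

theorem exists_half_of_involution (hf : ∀ a ∈ s, f a ∈ s) (hff : ∀ a ∈ s, f (f a) = a)
    (hfix : ∀ a ∈ s, f a ≠ a) : ∃ t ⊆ s, #s = 2 * #t ∧ ∀ a ∈ t, f a ∉ t := by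
  classical
  let r := WellOrderingRel (α := α)
  refine ⟨{a ∈ s | r a (f a)}, filter_subset _ _, ?_, fun a ha hfa => ?_⟩
  · have hsplit := card_filter_add_card_filter_not (s := s) (fun a => r a (f a))
    have hswap : #{a ∈ s | ¬r a (f a)} = #{a ∈ s | r a (f a)} := by
      refine card_nbij' f f (fun a ha => ?_) (fun a ha => ?_) (fun a ha => hff a (by simp_all))
        (fun a ha => hff a (by simp_all))
      · simp only [mem_coe, mem_filter] at ha ⊢
        refine ⟨hf a ha.1, ?_⟩
        rw [hff a ha.1]
        rcases trichotomous_of r a (f a) with h | h | h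
        · exact absurd h ha.2
        · exact absurd h.symm (hfix a ha.1)
        · exact h
      · simp only [mem_coe, mem_filter] at ha ⊢
        exact ⟨hf a ha.1, by rw [hff a ha.1]; exact asymm_of r ha.2⟩
    omega
  · simp only [mem_filter] at ha hfa
    exact asymm_of r ha.2 (by simpa [hff a ha.1] using hfa.2)

end Finset

namespace SimpleGraph.Subgraph

variable {V : Type*} {G : SimpleGraph V} {O M : G.Subgraph} {v w : V}

open Classical in
/-- An unmatched vertex is its own partner, so `partner` is an involution of all of `V`. -/
noncomputable def IsMatching.partner (hM : M.IsMatching) (v : V) : V :=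
  if hv : v ∈ M.verts then (hM hv).choose else v

namespace IsMatching

variable (hM : M.IsMatching)
include hM

lemma adj_partner (hv : v ∈ M.verts) : M.Adj v (hM.partner v) := by
  rw [partner, dif_pos hv]
  exact (hM hv).choose_spec.1

lemma partner_eq_of_adj (h : M.Adj v w) : hM.partner v = w :=
  hM.eq_of_adj_left (hM.adj_partner h.fst_mem) h

lemma partner_of_notMem (hv : v ∉ M.verts) : hM.partner v = v := by
  simp [partner, hv]

lemma partner_partner (v : V) : hM.partner (hM.partner v) = v := by
  by_cases hv : v ∈ M.verts
  · exact hM.partner_eq_of_adj (hM.adj_partner hv).symm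
  · rw [hM.partner_of_notMem hv, hM.partner_of_notMem hv]

lemma partner_injective : Function.Injective hM.partner :=
  Function.LeftInverse.injective hM.partner_partner

lemma partner_mem_verts (hv : v ∈ M.verts) : hM.partner v ∈ M.verts :=
  (hM.adj_partner hv).snd_mem

lemma partner_ne (hv : v ∈ M.verts) : hM.partner v ≠ v :=
  (M.adj_sub (hM.adj_partner hv)).ne'

lemma mem_verts_of_maximal (hmax : ∀ M' : G.Subgraph, M ≤ M' → M'.IsMatching → M' = M)
    (hvw : G.Adj v w) (hv : v ∉ M.verts) : w ∈ M.verts := by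
  by_contra hw
  have hdisj : Disjoint M.support (G.subgraphOfAdj hvw).support := by
    rw [support_subgraphOfAdj, hM.support_eq_verts, Set.disjoint_right]
    rintro x (rfl | rfl) <;> assumption
  have hsup := hmax _ le_sup_left (hM.sup (.subgraphOfAdj hvw) hdisj)
  have hadj : (M ⊔ G.subgraphOfAdj hvw).Adj v w := Or.inr (by simp)
  exact hv (hsup ▸ hadj.fst_mem)

lemma ncard_verts_le [Finite V] : M.verts.ncard ≤ 2 * M.edgeSet.ncard := by
  classical
  have := Fintype.ofFinite V
  rw [Set.ncard_eq_toFinset_card' M.verts, Set.ncard_eq_toFinset_card' M.edgeSet]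
  refine card_le_mul_card_image_of_maps_to (f := fun v => s(v, hM.partner v))
    (fun v hv => by simpa using hM.adj_partner (Set.mem_toFinset.1 hv)) 2 (fun e _ => ?_)
  induction e with
  | h x y =>
    refine (card_le_card fun v hv => ?_).trans (card_le_two (a := x) (b := y))
    have hve : v ∈ s(x, y) := (mem_filter.1 hv).2 ▸ Sym2.mem_mk_left v _
    simpa [Sym2.mem_iff] using hve

end IsMatching

lemma IsPerfectMatching.card_partner_notMem_eq [Fintype V] [DecidablePred (· ∈ M.verts)]
    (hO : O.IsPerfectMatching) (hM : M.IsMatching)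
    (hmax : ∀ M' : G.Subgraph, M ≤ M' → M'.IsMatching → M' = M) :
    #{a | a ∈ M.verts ∧ hO.1.partner a ∉ M.verts} = #{a | a ∉ M.verts} := by
  refine card_nbij' hO.1.partner hO.1.partner (fun a ha => ?_) (fun v hv => ?_)
    (fun a _ => hO.1.partner_partner a) (fun v _ => hO.1.partner_partner v)
  · simp_all
  · simp only [coe_filter, mem_univ, true_and, Set.mem_ofPred_eq] at hv ⊢
    refine ⟨hM.mem_verts_of_maximal hmax (O.adj_sub (hO.1.adj_partner (hO.2 v))) hv, ?_⟩
    rwa [hO.1.partner_partner]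

noncomputable def pathThrough (hO : O.IsMatching) (hM : M.IsMatching) (a : V) : V × V × V × V :=
  (hO.partner a, a, hM.partner a, hO.partner (hM.partner a))

lemma pathThrough_injective (hO : O.IsMatching) (hM : M.IsMatching) :
    Function.Injective (pathThrough hO hM) :=
  fun _ _ h => congrArg (·.2.1) h

variable [DecidableEq V]

def IsAugmentingPath3 (O M : G.Subgraph) (p : V × V × V × V) : Prop :=
  O.Adj p.1 p.2.1 ∧ M.Adj p.2.1 p.2.2.1 ∧ O.Adj p.2.2.1 p.2.2.2 ∧
    p.1 ∉ M.support ∧ p.2.2.2 ∉ M.support ∧ (pathVerts p).card = 4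

lemma isAugmentingPath3_pathThrough (hO : O.IsPerfectMatching) (hM : M.IsMatching) {a : V}
    (ha : a ∈ M.verts) (hoa : hO.1.partner a ∉ M.verts)
    (homa : hO.1.partner (hM.partner a) ∉ M.verts) :
    IsAugmentingPath3 O M (pathThrough hO.1 hM a) := by
  have hma := hM.partner_mem_verts ha
  have hne := hM.partner_ne ha
  have hinj := hO.1.partner_injective
  refine ⟨(hO.1.adj_partner (hO.2 a)).symm, hM.adj_partner ha, hO.1.adj_partner (hO.2 _),
    hM.support_eq_verts ▸ hoa, hM.support_eq_verts ▸ homa, ?_⟩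
  rw [pathVerts, pathThrough, card_insert_of_notMem, card_insert_of_notMem,
    card_insert_of_notMem, card_singleton] <;> grind

lemma disjoint_pathVerts_pathThrough (hO : O.IsMatching) (hM : M.IsMatching) {a b : V}
    (ha : a ∈ M.verts) (hoa : hO.partner a ∉ M.verts)
    (homa : hO.partner (hM.partner a) ∉ M.verts)
    (hb : b ∈ M.verts) (hob : hO.partner b ∉ M.verts)
    (homb : hO.partner (hM.partner b) ∉ M.verts)
    (hab : a ≠ b) (hamb : a ≠ hM.partner b) :
    Disjoint (pathVerts (pathThrough hO hM a)) (pathVerts (pathThrough hO hM b)) := by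
  classical
  -- Projecting unmatched vertices to their `O`-partners maps the path through `c` onto
  -- `{c, hM.partner c}`, and these pairs are disjoint for `a` and `b`.
  let π : V → V := fun x => if x ∈ M.verts then x else hO.partner x
  have hπ : ∀ c ∈ M.verts, hO.partner c ∉ M.verts →
      hO.partner (hM.partner c) ∉ M.verts →
      ∀ x ∈ pathVerts (pathThrough hO hM c), π x = c ∨ π x = hM.partner c := by
    intro c hc hoc homc x hx
    simp only [pathVerts, pathThrough, mem_insert, mem_singleton] at hx
    rcases hx with rfl | rfl | rfl | rfl <;>
      simp [π, hc, hoc, homc, hM.partner_mem_verts hc, hO.partner_partner]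
  rw [Finset.disjoint_left]
  intro x hxa hxb
  rcases hπ a ha hoa homa x hxa with h | h <;> rcases hπ b hb hob homb x hxb with h' | h'
  · exact hab (h.symm.trans h')
  · exact hamb (h.symm.trans h')
  · exact hamb (by rw [← hM.partner_partner a, ← h, h'])
  · exact hab (hM.partner_injective (h.symm.trans h'))

end SimpleGraph.Subgraph

open SimpleGraph.Subgraph in
theorem stmt_8_general {V : Type*} [Fintype V] [DecidableEq V] (G : SimpleGraph V)
    (OPT M : G.Subgraph) (hOPT : OPT.IsPerfectMatching) (hM : M.IsMatching)
    (hmax : ∀ M' : G.Subgraph, M ≤ M' → M'.IsMatching → M' = M)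
    (α : ℝ)
    (hsize : (M.edgeSet.ncard : ℝ) ≤ (1 / 2 + α) * ((Fintype.card V : ℝ) / 2)) :
    ∃ P : Finset (V × V × V × V),
      ((1 / 2 - 3 * α) * ((Fintype.card V : ℝ) / 2) ≤ (P.card : ℝ)) ∧
      (∀ p ∈ P, OPT.Adj p.1 p.2.1 ∧ M.Adj p.2.1 p.2.2.1 ∧ OPT.Adj p.2.2.1 p.2.2.2 ∧
        p.1 ∉ M.support ∧ p.2.2.2 ∉ M.support ∧
        (pathVerts p).card = 4) ∧
      (∀ p ∈ P, ∀ q ∈ P, p ≠ q → Disjoint (pathVerts p) (pathVerts q)) := by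
  classical
  set S : Finset V := {a | a ∈ M.verts}
  set W : Finset V := {a | a ∈ M.verts ∧ hOPT.1.partner a ∉ M.verts}
  set A : Finset V := {a ∈ W | hM.partner a ∈ W}
  have hW : #W + #S = Fintype.card V := by
    rw [hOPT.card_partner_notMem_eq hM hmax, add_comm, card_filter_add_card_filter_not, card_univ]
  have hS : #S ≤ 2 * M.edgeSet.ncard := by
    simpa [← Set.ncard_coe_finset, S] using hM.ncard_verts_le
  have hWA : 2 * #W ≤ #A + #S := two_mul_card_le_card_filter_add_card
    (fun a ha => by simp_all [W, S])
    (fun a ha => by simpa [S] using hM.partner_mem_verts (mem_filter.1 ha).2.1)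
    hM.partner_injective.injOn
  have hmemA : ∀ a, a ∈ A ↔ (a ∈ M.verts ∧ hOPT.1.partner a ∉ M.verts) ∧
      hM.partner a ∈ M.verts ∧ hOPT.1.partner (hM.partner a) ∉ M.verts := by
    simp [A, W]
  obtain ⟨B, hBA, hAB, hB⟩ := exists_half_of_involution (s := A) (f := hM.partner)
    (fun a ha => by rw [hmemA] at ha ⊢; rw [hM.partner_partner]; exact ha.symm)
    (fun a _ => hM.partner_partner a) (fun a ha => hM.partner_ne ((hmemA a).1 ha).1.1)
  refine ⟨B.image (pathThrough hOPT.1 hM), ?_, ?_, ?_⟩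
  · rw [card_image_of_injective _ (pathThrough_injective _ _)]
    have : (#A : ℝ) = 2 * #B := by exact_mod_cast hAB
    have : (#W : ℝ) + #S = Fintype.card V := by exact_mod_cast hW
    have : (#S : ℝ) ≤ 2 * M.edgeSet.ncard := by exact_mod_cast hS
    have : 2 * (#W : ℝ) ≤ #A + #S := by exact_mod_cast hWA
    linarith
  · simp only [mem_image]
    rintro _ ⟨a, ha, rfl⟩
    obtain ⟨⟨haM, hoa⟩, -, homa⟩ := (hmemA a).1 (hBA ha)
    exact isAugmentingPath3_pathThrough hOPT hM haM hoa homa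
  · simp only [mem_image]
    rintro _ ⟨a, ha, rfl⟩ _ ⟨b, hb, rfl⟩ hne
    obtain ⟨⟨haM, hoa⟩, -, homa⟩ := (hmemA a).1 (hBA ha)
    obtain ⟨⟨hbM, hob⟩, -, homb⟩ := (hmemA b).1 (hBA hb)
    exact disjoint_pathVerts_pathThrough hOPT.1 hM haM hoa homa hbM hob homb
      (fun h => hne (h ▸ rfl)) (fun h => hB b hb (h ▸ ha))

theorem stmt_8 {V : Type*} [Fintype V] [DecidableEq V] (G : SimpleGraph V)
    (OPT M : G.Subgraph) (hOPT : OPT.IsPerfectMatching) (hM : M.IsMatching)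
    (hmax : ∀ M' : G.Subgraph, M ≤ M' → M'.IsMatching → M' = M)
    (α : ℝ) (hα : 0 ≤ α)
    (hsize : (M.edgeSet.ncard : ℝ) ≤ (1 / 2 + α) * ((Fintype.card V : ℝ) / 2)) :
    ∃ P : Finset (V × V × V × V),
      ((1 / 2 - 3 * α) * ((Fintype.card V : ℝ) / 2) ≤ (P.card : ℝ)) ∧
      (∀ p ∈ P, OPT.Adj p.1 p.2.1 ∧ M.Adj p.2.1 p.2.2.1 ∧ OPT.Adj p.2.2.1 p.2.2.2 ∧
        p.1 ∉ M.support ∧ p.2.2.2 ∉ M.support ∧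
        (pathVerts p).card = 4) ∧
      (∀ p ∈ P, ∀ q ∈ P, p ≠ q → Disjoint (pathVerts p) (pathVerts q)) :=
  stmt_8_general G OPT M hOPT hM hmax α hsize
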